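/- Let w₁, …, w_n be smooth functions S¹ → ℂⁿ whose Fourier series converge absolutely. Suppose that for all j, k ∈ {1,…,n} and all p ∈ ℤ, the L² inner product ⟨w_j, z^p w_k⟩ equals δ_{jk}·δ_{p0}. Then for every θ ∈ S¹, the vectors w₁(θ), …, w_n(θ) form an orthonormal basis of ℂⁿ. -/

import Mathlib

open Complex Real

noncomputable section

/-- if `w₁, …, w_n` are smooth `2π`-periodic functions `ℝ → ℂⁿ` (i.e. maps
`S¹ → ℂⁿ`) with absolutely convergent Fourier series, and the normalised `L²` inner
products satisfy `⟨w_j, z^p w_k⟩ = δ_{jk} δ_{p0}`, then for every `θ` the vectors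
`w₁(θ), …, w_n(θ)` form an orthonormal basis of `ℂⁿ`. -/
theorem orthonormal_basis_of_inner_products (n : ℕ)
    (w : Fin n → ℝ → EuclideanSpace ℂ (Fin n))
    (hsmooth : ∀ j, ContDiff ℝ (⊤ : ℕ∞) (w j))
    (hper : ∀ j, Function.Periodic (w j) (2 * π))
    -- the Fourier coefficients of the `w_j`:
    (c : Fin n → ℤ → EuclideanSpace ℂ (Fin n))
    (hc : ∀ j l, c j l
      = (1 / (2 * π) : ℂ) • ∫ t in (0:ℝ)..(2 * π), Complex.exp (-(l : ℂ) * t * I) • w j t)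
    -- absolute convergence of the Fourier series, summing to `w_j`:
    (habs : ∀ j, Summable fun l : ℤ => ‖c j l‖)
    (hsum : ∀ j (t : ℝ), HasSum (fun l : ℤ => Complex.exp ((l : ℂ) * (t : ℂ) * I) • c j l) (w j t))
    -- the inner product hypothesis `⟨w_j, z^p w_k⟩ = δ_{jk} δ_{p0}`:
    (hinner : ∀ j k : Fin n, ∀ p : ℤ,
      (1 / (2 * π) : ℂ) * ∫ t in (0:ℝ)..(2 * π),
          (inner ℂ (w j t) (Complex.exp ((p : ℂ) * t * I) • w k t) : ℂ)
        = if j = k ∧ p = 0 then 1 else 0) :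
    ∀ θ : ℝ, Orthonormal ℂ (fun j => w j θ) ∧
      Submodule.span ℂ (Set.range fun j => w j θ) = ⊤ := by
  haveI : Fact (0 < 2 * π) := ⟨by positivity⟩
  intro θ
  have key : ∀ j k : Fin n, (inner ℂ (w j θ) (w k θ) : ℂ) = if j = k then 1 else 0 := by
    intro j k
    set f : ℝ → ℂ := fun t => inner ℂ (w j t) (w k t) with hf
    have hfper : Function.Periodic f (2 * π) := by
      intro t
      simp only [hf, hper j t, hper k t]
    have hfcont : Continuous f :=
      Continuous.inner (hsmooth j).continuous (hsmooth k).continuous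
    have hliftcont : Continuous hfper.lift := by
      rw [isQuotientMap_quotient_mk'.continuous_iff]
      exact hfcont
    set F : C(AddCircle (2 * π), ℂ) := ⟨hfper.lift, hliftcont⟩ with hF
    have hFcoe : ∀ t : ℝ, F (t : AddCircle (2 * π)) = f t := fun t => hfper.lift_coe t
    have hcoeff : ∀ p : ℤ, fourierCoeff (F : AddCircle (2 * π) → ℂ) p
        = if j = k ∧ p = 0 then 1 else 0 := by
      intro p
      rw [fourierCoeff_eq_intervalIntegral _ p 0]
      have hint : ∀ t : ℝ, t ∈ Set.uIcc (0:ℝ) (0 + 2 * π) →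
          (fourier (-p) (t : AddCircle (2 * π))) • F (t : AddCircle (2 * π))
          = (inner ℂ (w j t) (Complex.exp (((-p : ℤ) : ℂ) * t * I) • w k t) : ℂ) := by
        intro t _
        rw [hFcoe t, fourier_coe_apply, inner_smul_right]
        have hpi : (2 * (π:ℂ)) ≠ 0 := by
          simp [Real.pi_ne_zero, Complex.ofReal_ne_zero]
        congr 1
        · congr 1
          push_cast
          field_simp
      rw [intervalIntegral.integral_congr hint]
      have := hinner j k (-p)
      rw [zero_add]
      rw [Complex.real_smul, show ((1 / (2 * π) : ℝ) : ℂ) = 1 / (2 * (π : ℂ)) by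
        push_cast; ring, this]
      simp only [neg_eq_zero]
    have hsummable : Summable (fourierCoeff (F : AddCircle (2 * π) → ℂ)) := by
      apply summable_of_ne_finset_zero (s := ({0} : Finset ℤ))
      intro p hp
      have hp0 : p ≠ 0 := by simpa using hp
      simp [hcoeff, hp0]
    have h1 := has_pointwise_sum_fourier_series_of_summable hsummable (θ : AddCircle (2 * π))
    have h2 : HasSum (fun i : ℤ => fourierCoeff (F : AddCircle (2 * π) → ℂ) i •
        fourier i (θ : AddCircle (2 * π))) (if j = k then (1:ℂ) else 0) := by
      have hfun : ∀ i : ℤ, fourierCoeff (F : AddCircle (2 * π) → ℂ) i •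
          fourier i (θ : AddCircle (2 * π))
          = if i = 0 then (if j = k then (1:ℂ) else 0) else 0 := by
        intro i
        by_cases hi : i = 0
        · subst hi
          simp [hcoeff 0]
        · simp [hcoeff i, hi]
      rw [show (fun i : ℤ => fourierCoeff (F : AddCircle (2 * π) → ℂ) i •
          fourier i (θ : AddCircle (2 * π))) = fun i : ℤ =>
          if i = 0 then (if j = k then (1:ℂ) else 0) else 0 from funext hfun]
      exact hasSum_ite_eq 0 _
    have := h1.unique h2
    rw [hFcoe θ] at this
    exact this
  have hon : Orthonormal ℂ (fun j => w j θ) := by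
    rw [orthonormal_iff_ite]
    exact fun i j => key i j
  refine ⟨hon, ?_⟩
  apply hon.linearIndependent.span_eq_top_of_card_eq_finrank'
  simp
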